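/- arXiv:1711.09332 — 5 statements merged into one kernel-verified Lean document; each statement's English description precedes it below -/
import Mathlib

section
/- Let δ ≥ 1 and let D ⊆ ℤ/δℤ be a difference set with |D| ≥ 3. Consider the incidence structure with point set P = ℤ/δℤ and line set L = ℤ/δℤ, in which a point p is incident to a line l if and only if l − p ∈ D. Then this incidence structure is a projective plane: any two distinct points lie on a unique common line, any two distinct lines meet in a unique common point, and there exist three points and three lines in nondegenerate position. Moreover its order equals |D| − 1 (each point lies on exactly |D| lines and each line contains exactly |D| points). -/
/-- `D ⊆ ℤ/δℤ` is a difference set if the difference map `(x, y) ↦ x - y`, restricted to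
off-diagonal pairs of elements of `D`, is a bijection onto the nonzero elements of `ℤ/δℤ`. -/
def IsDiffSet {δ : ℕ} (D : Set (ZMod δ)) : Prop :=
  Set.BijOn (fun p : ZMod δ × ZMod δ => p.1 - p.2)
    {p : ZMod δ × ZMod δ | p.1 ∈ D ∧ p.2 ∈ D ∧ p.1 ≠ p.2}
    {n : ZMod δ | n ≠ 0}

lemma diff_unique {δ : ℕ} {D : Set (ZMod δ)} (hD : IsDiffSet D) {d : ZMod δ} (hd : d ≠ 0) :
    ∃! xy : ZMod δ × ZMod δ,
      (xy.1 ∈ D ∧ xy.2 ∈ D ∧ xy.1 ≠ xy.2) ∧ xy.1 - xy.2 = d := by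
  obtain ⟨xy, hxy, hval⟩ := hD.2.2 (show d ∈ {n : ZMod δ | n ≠ 0} from hd)
  exact ⟨xy, ⟨hxy, hval⟩, fun z ⟨hz, hzval⟩ => hD.2.1 hz hxy (hzval.trans hval.symm)⟩

lemma count_aux {δ : ℕ} (D : Set (ZMod δ)) (p : ZMod δ) :
    {l : ZMod δ | l - p ∈ D}.ncard = D.ncard := by
  have h : {l : ZMod δ | l - p ∈ D} = (· + p) '' D := by
    ext l
    simp only [Set.mem_setOf_eq, Set.mem_image]
    constructor
    · exact fun h => ⟨l - p, h, by ring⟩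
    · rintro ⟨d, hd, rfl⟩; simpa using hd
  rw [h, Set.ncard_image_of_injective _ (add_left_injective p)]

lemma count_aux' {δ : ℕ} (D : Set (ZMod δ)) (l : ZMod δ) :
    {p : ZMod δ | l - p ∈ D}.ncard = D.ncard := by
  have h : {p : ZMod δ | l - p ∈ D} = (l - ·) '' D := by
    ext p
    simp only [Set.mem_setOf_eq, Set.mem_image]
    constructor
    · exact fun h => ⟨l - p, h, by ring⟩
    · rintro ⟨d, hd, rfl⟩; simpa using hd
  rw [h, Set.ncard_image_of_injective _ (fun a b hab => by
    simpa [sub_right_injective.eq_iff] using hab)]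

/-- for a difference set `D ⊆ ℤ/δℤ` with `|D| ≥ 3`, the Singer incidence
structure `T(D)` (points `ℤ/δℤ`, lines `ℤ/δℤ`, point `p` incident to line `l` iff
`l - p ∈ D`) is a projective plane: two distinct points lie on a unique common line, two
distinct lines meet in a unique point, there is a nondegenerate configuration of three
points and three lines, and each point lies on exactly `|D|` lines while each line
contains exactly `|D|` points (so the order of the plane is `|D| - 1`). -/
theorem singer_structure_is_projective_plane (δ : ℕ) (hδ : 1 ≤ δ) (D : Set (ZMod δ))
    (hcard : 3 ≤ D.ncard) (hD : IsDiffSet D) :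
    -- any two distinct points lie on a unique common line
    (∀ p p' : ZMod δ, p ≠ p' → ∃! l : ZMod δ, l - p ∈ D ∧ l - p' ∈ D) ∧
    -- any two distinct lines meet in a unique common point
    (∀ l l' : ZMod δ, l ≠ l' → ∃! p : ZMod δ, l - p ∈ D ∧ l' - p ∈ D) ∧
    -- three points and three lines in nondegenerate position
    (∃ p₁ p₂ p₃ l₁ l₂ l₃ : ZMod δ,
      l₂ - p₁ ∉ D ∧ l₃ - p₁ ∉ D ∧
      l₁ - p₂ ∉ D ∧ l₂ - p₂ ∈ D ∧ l₃ - p₂ ∈ D ∧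
      l₁ - p₃ ∉ D ∧ l₂ - p₃ ∈ D ∧ l₃ - p₃ ∉ D) ∧
    -- each point lies on exactly `|D|` lines
    (∀ p : ZMod δ, {l : ZMod δ | l - p ∈ D}.ncard = D.ncard) ∧
    -- each line contains exactly `|D|` points
    (∀ l : ZMod δ, {p : ZMod δ | l - p ∈ D}.ncard = D.ncard) := by
  haveI : NeZero δ := ⟨by omega⟩
  set k := D.ncard with hk
  -- two points lie on a unique line
  have hpt : ∀ p p' : ZMod δ, p ≠ p' → ∃! l : ZMod δ, l - p ∈ D ∧ l - p' ∈ D := by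
    intro p p' hpp
    obtain ⟨⟨x, y⟩, ⟨⟨hx, hy, hxy⟩, hval⟩, huniq⟩ :=
      diff_unique hD (show p' - p ≠ 0 from sub_ne_zero.mpr (Ne.symm hpp))
    simp only at hx hy hxy hval
    refine ⟨p + x, ⟨by simpa using hx, ?_⟩, ?_⟩
    · have : p + x - p' = y := by linear_combination hval
      rwa [this]
    · intro l ⟨h1, h2⟩
      have hne : l - p ≠ l - p' := fun h => hpp (sub_right_injective h)
      have := huniq (l - p, l - p') ⟨⟨h1, h2, hne⟩, by ring⟩
      have h1' : l - p = x := congrArg Prod.fst this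
      linear_combination h1'
  -- two lines meet in a unique point
  have hln : ∀ l l' : ZMod δ, l ≠ l' → ∃! p : ZMod δ, l - p ∈ D ∧ l' - p ∈ D := by
    intro l l' hll
    obtain ⟨⟨x, y⟩, ⟨⟨hx, hy, hxy⟩, hval⟩, huniq⟩ :=
      diff_unique hD (show l - l' ≠ 0 from sub_ne_zero.mpr hll)
    simp only at hx hy hxy hval
    refine ⟨l - x, ⟨by simpa using hx, ?_⟩, ?_⟩
    · have : l' - (l - x) = y := by linear_combination hval
      rwa [this]
    · intro p ⟨h1, h2⟩
      have hne : l - p ≠ l' - p := fun h => hll (by linear_combination h)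
      have := huniq (l - p, l' - p) ⟨⟨h1, h2, hne⟩, by ring⟩
      have h1' : l - p = x := congrArg Prod.fst this
      linear_combination -h1'
  refine ⟨hpt, hln, ?_, count_aux D, count_aux' D⟩
  -- cardinality computation: δ = k*k - k + 1
  have hcardS : {p : ZMod δ × ZMod δ | p.1 ∈ D ∧ p.2 ∈ D ∧ p.1 ≠ p.2}.ncard = k * k - k := by
    have hSeq : {p : ZMod δ × ZMod δ | p.1 ∈ D ∧ p.2 ∈ D ∧ p.1 ≠ p.2}
        = (D ×ˢ D) \ ((fun x => (x, x)) '' D) := by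
      ext ⟨a, b⟩
      simp only [Set.mem_setOf_eq, Set.mem_diff, Set.mem_prod, Set.mem_image]
      constructor
      · rintro ⟨ha, hb, hab⟩
        exact ⟨⟨ha, hb⟩, by rintro ⟨x, _, hx⟩; exact hab (by
          obtain ⟨h1, h2⟩ := Prod.mk.injEq .. ▸ hx; simp_all)⟩
      · rintro ⟨⟨ha, hb⟩, hnd⟩
        refine ⟨ha, hb, fun h => hnd ⟨a, ha, by simp [h]⟩⟩
    rw [hSeq, Set.ncard_diff (by rintro _ ⟨x, hx, rfl⟩; exact ⟨hx, hx⟩)]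
    rw [Set.ncard_image_of_injective _ (fun a b h => (Prod.mk.injEq .. ▸ h).1)]
    congr 1
    rw [← Nat.card_coe_set_eq, Nat.card_congr (Equiv.Set.prod D D), Nat.card_prod,
      Nat.card_coe_set_eq]
  have himg := Set.ncard_image_of_injOn hD.2.1
  rw [hD.image_eq] at himg
  have hnz : {n : ZMod δ | n ≠ 0}.ncard = δ - 1 := by
    have : {n : ZMod δ | n ≠ 0} = ({0} : Set (ZMod δ))ᶜ := by ext n; simp
    have h0 := Set.ncard_add_ncard_compl ({0} : Set (ZMod δ))
    rw [Set.ncard_singleton, Nat.card_eq_fintype_card, ZMod.card] at h0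
    rw [this]
    omega
  have hδeq : δ - 1 = k * k - k := by rw [← hnz, himg, hcardS]
  have hk3 : 3 * k ≤ k * k := Nat.mul_le_mul_right k hcard
  have hδk : δ = k * k - k + 1 := by omega
  have h2k : 2 * k < δ := by omega
  have huniv : (Set.univ : Set (ZMod δ)).ncard = δ := by
    rw [Set.ncard_univ, Nat.card_eq_fintype_card, ZMod.card]
  -- pick a line l₂ = 0 and two distinct points on it
  set l₂ : ZMod δ := 0 with hl₂
  have hA : {p : ZMod δ | l₂ - p ∈ D}.ncard = k := count_aux' D l₂
  have h2A : 1 < {p : ZMod δ | l₂ - p ∈ D}.ncard := by omega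
  obtain ⟨p₂, p₃, hp₂, hp₃, hp23⟩ := (Set.one_lt_ncard_iff (Set.toFinite _)).mp h2A
  -- pick a line l₃ ≠ l₂ through p₂
  have hB : {l : ZMod δ | l - p₂ ∈ D}.ncard = k := count_aux D p₂
  have h2B : 1 < {l : ZMod δ | l - p₂ ∈ D}.ncard := by omega
  obtain ⟨a, b, ha, hb, hab⟩ := (Set.one_lt_ncard_iff (Set.toFinite _)).mp h2B
  obtain ⟨l₃, hl₃mem, hl₃ne⟩ : ∃ l₃, l₃ - p₂ ∈ D ∧ l₃ ≠ l₂ := by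
    by_cases h : a = l₂
    · exact ⟨b, hb, fun hbl => hab (by rw [h, hbl])⟩
    · exact ⟨a, ha, h⟩
  -- p₃ is not on l₃
  have hp₃l₃ : l₃ - p₃ ∉ D := by
    intro hmem
    obtain ⟨l, _, hluniq⟩ := hpt p₂ p₃ hp23
    exact hl₃ne ((hluniq l₃ ⟨hl₃mem, hmem⟩).trans (hluniq l₂ ⟨hp₂, hp₃⟩).symm)
  -- pick a point p₁ off l₂ and l₃
  obtain ⟨p₁, hp₁⟩ : ∃ p₁ : ZMod δ, p₁ ∉ {p : ZMod δ | l₂ - p ∈ D} ∪ {p : ZMod δ | l₃ - p ∈ D} := by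
    rw [← Set.ne_univ_iff_exists_notMem]
    intro h
    have hle := Set.ncard_union_le {p : ZMod δ | l₂ - p ∈ D} {p : ZMod δ | l₃ - p ∈ D}
    rw [h, huniv, hA, count_aux' D l₃] at hle
    omega
  -- pick a line l₁ missing p₂ and p₃
  obtain ⟨l₁, hl₁⟩ : ∃ l₁ : ZMod δ, l₁ ∉ {l : ZMod δ | l - p₂ ∈ D} ∪ {l : ZMod δ | l - p₃ ∈ D} := by
    rw [← Set.ne_univ_iff_exists_notMem]
    intro h
    have hle := Set.ncard_union_le {l : ZMod δ | l - p₂ ∈ D} {l : ZMod δ | l - p₃ ∈ D}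
    rw [h, huniv, count_aux D p₂, count_aux D p₃] at hle
    omega
  simp only [Set.mem_union, Set.mem_setOf_eq, not_or] at hp₁ hl₁
  exact ⟨p₁, p₂, p₃, l₁, l₂, l₃, hp₁.1, hp₁.2, hl₁.1, hp₂, hl₃mem, hl₁.2, hp₃, hp₃l₃⟩
end

section
/- For every prime power q, setting δ = q² + q + 1, there exists a subset D ⊆ ℤ/δℤ such that the incidence structure with point set ℤ/δℤ and line set ℤ/δℤ, in which a point p is incident to a line l if and only if l − p ∈ D, is a projective plane of order q (any two distinct points lie on a unique common line, any two distinct lines meet in a unique common point, there exist three points and three lines in nondegenerate position, and each line contains exactly q + 1 points). -/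
/-!
Singer's construction. Let `F / K` be a cubic extension of finite fields with `|K| = q`. The
points of the projective plane over `K` with underlying space `F` form the cyclic group
`Fˣ ⧸ Kˣ` of order `q² + q + 1`, and a `K`-plane `W ⊆ F` gives a line `L` in it. For
`g = [a] ≠ 1` the planes `W` and `a⁻¹ W` differ, because an element of `F` stabilising a plane
lies in `K` (the degree `3` is prime); so they meet in a single projective point, i.e. there is
exactly one `b ∈ L` with `b g ∈ L`. Such a planar difference set `L` makes its translates the
lines of a projective plane, and counting differences gives `|L| (|L| - 1) = q² + q`.
-/

theorem Set.ncard_offDiag {α : Type*} (s : Set α) (hs : s.Finite) :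
    s.offDiag.ncard = s.ncard * s.ncard - s.ncard := by
  classical
  have := hs.fintype
  rw [Set.ncard_eq_toFinset_card' s.offDiag, Set.toFinset_offDiag, Finset.offDiag_card,
    Set.ncard_eq_toFinset_card']

theorem exists_notMem_of_ncard_add_ncard_lt {α : Type*} [Finite α] {A B : Set α}
    (h : A.ncard + B.ncard < Nat.card α) : ∃ x, x ∉ A ∧ x ∉ B := by
  by_contra! hcover
  have : Set.univ ⊆ A ∪ B := fun x _ => (em (x ∈ A)).imp_right (hcover x)
  have := Set.ncard_le_ncard this
  rw [Set.ncard_univ] at this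
  linarith [Set.ncard_union_le A B]

section DifferenceSet

variable {G : Type*} [AddCommGroup G]

theorem ncard_setOf_const_sub_mem (D : Set G) (l : G) : {p | l - p ∈ D}.ncard = D.ncard :=
  Set.ncard_preimage_of_injective_subset_range sub_right_injective
    fun d _ => ⟨l - d, sub_sub_cancel l d⟩

theorem ncard_setOf_sub_const_mem (D : Set G) (p : G) : {l | l - p ∈ D}.ncard = D.ncard :=
  Set.ncard_preimage_of_injective_subset_range sub_left_injective
    fun d _ => ⟨d + p, add_sub_cancel_right d p⟩

def IsPlanarDifferenceSet (D : Set G) : Prop :=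
  ∀ d : G, d ≠ 0 → ∃! b, b ∈ D ∧ b + d ∈ D

namespace IsPlanarDifferenceSet

variable {D : Set G}

theorem preimage {H : Type*} [AddCommGroup H] (hD : IsPlanarDifferenceSet D) (e : H ≃+ G) :
    IsPlanarDifferenceSet (e ⁻¹' D) := by
  intro d hd
  obtain ⟨b, hb, huniq⟩ := hD (e d) (by simpa using hd)
  refine ⟨e.symm b, by simpa using hb, fun y hy => ?_⟩
  rw [← huniq (e y) (by simpa using hy), AddEquiv.symm_apply_apply]

theorem existsUnique_line (hD : IsPlanarDifferenceSet D) {p p' : G} (h : p ≠ p') :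
    ∃! l, l - p ∈ D ∧ l - p' ∈ D := by
  obtain ⟨b, ⟨hb, hbd⟩, huniq⟩ := hD (p - p') (sub_ne_zero_of_ne h)
  refine ⟨b + p, ⟨by simpa using hb, by convert hbd using 1; abel⟩, fun l ⟨hl, hl'⟩ => ?_⟩
  have : l - p = b := huniq _ ⟨hl, by convert hl' using 1; abel⟩
  rw [← this, sub_add_cancel]

theorem existsUnique_point (hD : IsPlanarDifferenceSet D) {l l' : G} (h : l ≠ l') :
    ∃! p, l - p ∈ D ∧ l' - p ∈ D := by
  obtain ⟨b, ⟨hb, hbd⟩, huniq⟩ := hD (l - l') (sub_ne_zero_of_ne h)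
  refine ⟨l' - b, ⟨by convert hbd using 1; abel, by simpa using hb⟩, fun p ⟨hp, hp'⟩ => ?_⟩
  have : l' - p = b := huniq _ ⟨hp', by convert hp using 1; abel⟩
  rw [← this, sub_sub_cancel]

theorem ncard_offDiag_eq (hD : IsPlanarDifferenceSet D) : D.offDiag.ncard = Nat.card G - 1 := by
  rw [← Set.ncard_univ, ← Set.ncard_sdiff_singleton_of_mem (Set.mem_univ (0 : G))]
  refine Set.ncard_congr (fun x _ => x.1 - x.2) (fun x hx => ?_) (fun x y hx hy hxy => ?_)
    (fun d hd => ?_)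
  · exact ⟨Set.mem_univ _, sub_ne_zero_of_ne hx.2.2⟩
  · obtain ⟨b, -, huniq⟩ := hD _ (sub_ne_zero_of_ne hx.2.2)
    have hx2 : x.2 = b := huniq _ ⟨hx.2.1, by simpa using hx.1⟩
    have hy2 : y.2 = b := huniq _ ⟨hy.2.1, by rw [hxy]; simpa using hy.1⟩
    ext
    · simpa [hx2, hy2] using hxy
    · rw [hx2, hy2]
  · obtain ⟨b, ⟨hb, hbd⟩, -⟩ := hD d hd.2
    exact ⟨(b + d, b), ⟨hbd, hb, by simpa using hd.2⟩, add_sub_cancel_left b d⟩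

variable [Finite G]

theorem ncard_eq_succ (hD : IsPlanarDifferenceSet D) {n : ℕ} (hn : 0 < n)
    (hG : Nat.card G = n ^ 2 + n + 1) : D.ncard = n + 1 := by
  have hk := hD.ncard_offDiag_eq
  rw [Set.ncard_offDiag D D.toFinite, hG] at hk
  have := Nat.le_mul_self D.ncard
  have : D.ncard * D.ncard = n * n + n + D.ncard := by rw [sq] at hk; omega
  nlinarith

theorem exists_nondegenerate (hD : IsPlanarDifferenceSet D) (h₁ : 1 < D.ncard)
    (h₂ : 2 * D.ncard < Nat.card G) :
    ∃ p₁ p₂ p₃ l₁ l₂ l₃ : G,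
      l₂ - p₁ ∉ D ∧ l₃ - p₁ ∉ D ∧
      l₁ - p₂ ∉ D ∧ l₂ - p₂ ∈ D ∧ l₃ - p₂ ∈ D ∧
      l₁ - p₃ ∉ D ∧ l₂ - p₃ ∈ D ∧ l₃ - p₃ ∉ D := by
  obtain ⟨a, b, ha, hb, hab⟩ := (Set.one_lt_ncard_iff D.toFinite).1 h₁
  obtain ⟨p₁, hp₁a, hp₁b⟩ := exists_notMem_of_ncard_add_ncard_lt
    (A := {p | a - p ∈ D}) (B := {p | b - p ∈ D}) (by
      rw [ncard_setOf_const_sub_mem, ncard_setOf_const_sub_mem]; omega)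
  obtain ⟨l₁, hl₁a, hl₁b⟩ := exists_notMem_of_ncard_add_ncard_lt
    (A := {l | l - 0 ∈ D}) (B := {l | l - (a - b) ∈ D}) (by
      rw [ncard_setOf_sub_const_mem, ncard_setOf_sub_const_mem]; omega)
  refine ⟨p₁, 0, a - b, l₁, a, b, hp₁a, hp₁b, hl₁a, by simpa using ha, by simpa using hb, hl₁b,
    by simpa using hb, fun hba => hab ?_⟩
  -- otherwise the lines `a` and `b` both pass through the points `0` and `a - b`
  refine (hD.existsUnique_line (p := 0) (p' := a - b) fun h => hab ?_).unique
    ⟨by simpa using ha, by simpa using hb⟩ ⟨by simpa using hb, hba⟩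
  rwa [eq_comm, sub_eq_zero] at h

end IsPlanarDifferenceSet

end DifferenceSet

open Module

theorem Submodule.finrank_inf_add_one_of_ne {K V : Type*} [Field K] [AddCommGroup V] [Module K V]
    [FiniteDimensional K V] {W W' : Submodule K V} (hW : finrank K W + 1 = finrank K V)
    (hW' : finrank K W' = finrank K W) (hne : W ≠ W') :
    finrank K ↥(W ⊓ W') + 1 = finrank K W := by
  have hlt : W < W ⊔ W' := by
    refine lt_of_le_of_ne le_sup_left fun h => hne ?_
    exact (Submodule.eq_of_le_of_finrank_eq (h ▸ le_sup_right) hW').symm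
  have := Submodule.finrank_lt_finrank_of_lt hlt
  have := Submodule.finrank_le (W ⊔ W')
  have := Submodule.finrank_sup_add_finrank_inf_eq W W'
  omega

variable {K F : Type*} [Field K] [Field F] [Algebra K F]

def Submodule.mulStabilizer (W : Submodule K F) : Subalgebra K F where
  carrier := {a | ∀ w ∈ W, a * w ∈ W}
  mul_mem' ha hb w hw := by rw [mul_assoc]; exact ha _ (hb w hw)
  add_mem' ha hb w hw := by rw [add_mul]; exact W.add_mem (ha w hw) (hb w hw)
  algebraMap_mem' c w hw := by rw [← Algebra.smul_def]; exact W.smul_mem c hw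

theorem Submodule.mem_bot_of_forall_mul_mem (hp : (finrank K F).Prime) {W : Submodule K F}
    (hW₀ : W ≠ ⊥) (hW : W ≠ ⊤) {a : F} (ha : ∀ w ∈ W, a * w ∈ W) :
    a ∈ (⊥ : Subalgebra K F) := by
  rcases (Subalgebra.isSimpleOrder_of_finrank_prime K F hp).eq_bot_or_eq_top W.mulStabilizer
    with h | h
  · exact h ▸ ha
  · obtain ⟨w, hw, hw0⟩ := W.exists_mem_ne_zero_of_ne_bot hW₀
    refine absurd (eq_top_iff.2 fun y _ => ?_) hW
    have : y * w⁻¹ ∈ W.mulStabilizer := h ▸ Algebra.mem_top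
    simpa [hw0] using this w hw

variable (K F) in
abbrev SingerGroup : Type _ := Fˣ ⧸ (Units.map (algebraMap K F : K →* F)).range

namespace SingerGroup

def lineOf (W : Submodule K F) : Set (SingerGroup K F) :=
  QuotientGroup.mk '' {x : Fˣ | (x : F) ∈ W}

theorem mk_eq_mk_iff {x y : Fˣ} :
    (x : SingerGroup K F) = y ↔ ∃ c : K, (y : F) = c • (x : F) := by
  rw [QuotientGroup.eq]
  constructor
  · rintro ⟨c, hc⟩
    refine ⟨c, ?_⟩
    have := congrArg Units.val hc
    simp only [Units.coe_map, MonoidHom.coe_coe, Units.val_mul] at this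
    rw [Algebra.smul_def, this, mul_comm, Units.mul_inv_cancel_left]
  · rintro ⟨c, hc⟩
    have hc0 : c ≠ 0 := by rintro rfl; simp at hc
    refine ⟨Units.mk0 c hc0, Units.ext ?_⟩
    simp [hc, Algebra.smul_def, mul_left_comm _ (algebraMap K F c)]

theorem mk_eq_one_iff {a : Fˣ} : (a : SingerGroup K F) = 1 ↔ (a : F) ∈ (⊥ : Subalgebra K F) := by
  rw [← QuotientGroup.mk_one, eq_comm, mk_eq_mk_iff, Algebra.mem_bot]
  simp [Algebra.algebraMap_eq_smul_one, eq_comm]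

theorem mk_mem_lineOf_iff {W : Submodule K F} {x : Fˣ} :
    (x : SingerGroup K F) ∈ lineOf W ↔ (x : F) ∈ W := by
  refine ⟨?_, fun hx => ⟨x, hx, rfl⟩⟩
  rintro ⟨y, hy, hyx⟩
  obtain ⟨c, hc⟩ := mk_eq_mk_iff.1 hyx
  exact hc ▸ W.smul_mem c hy

theorem existsUnique_mem_lineOf_mul_mem [FiniteDimensional K F] (hF : finrank K F = 3)
    {W : Submodule K F} (hW : finrank K W = 2) {g : SingerGroup K F} (hg : g ≠ 1) :
    ∃! b, b ∈ lineOf W ∧ b * g ∈ lineOf W := by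
  induction g using QuotientGroup.induction_on with | H a => ?_
  obtain ⟨W', hW'_mem, hW'⟩ : ∃ W' : Submodule K F,
      (∀ x, x ∈ W' ↔ x * a ∈ W) ∧ finrank K W' = finrank K W :=
    ⟨W.comap (DistribMulAction.toLinearEquiv K F a : F →ₗ[K] F),
      fun x => by rw [mul_comm]; exact Iff.rfl,
      by rw [Submodule.comap_equiv_eq_map_symm, LinearEquiv.finrank_map_eq]⟩
  have hne : W ≠ W' := by
    refine fun h => hg (mk_eq_one_iff.2 (Submodule.mem_bot_of_forall_mul_mem
      (hF ▸ Nat.prime_three) ?_ ?_ fun w hw => mul_comm w a ▸ (hW'_mem w).1 (h ▸ hw)))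
    · rintro rfl; simp at hW
    · rintro rfl; rw [finrank_top] at hW; omega
  have hrank : finrank K ↥(W ⊓ W') = 1 := by
    have := Submodule.finrank_inf_add_one_of_ne (by omega) hW' hne
    omega
  obtain ⟨x, hx, hx0⟩ := (W ⊓ W').exists_mem_ne_zero_of_ne_bot fun h => by
    rw [h, finrank_bot] at hrank; exact zero_ne_one hrank
  refine ⟨Units.mk0 x hx0, ⟨mk_mem_lineOf_iff.2 hx.1, ?_⟩, ?_⟩
  · rw [← QuotientGroup.mk_mul, mk_mem_lineOf_iff]; exact (hW'_mem x).1 hx.2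
  · rintro b ⟨hb, hbg⟩
    induction b using QuotientGroup.induction_on with | H y => ?_
    rw [← QuotientGroup.mk_mul, mk_mem_lineOf_iff, Units.val_mul] at hbg
    rw [mk_mem_lineOf_iff] at hb
    obtain ⟨c, hc⟩ := exists_smul_eq_of_finrank_eq_one hrank
      (x := (⟨x, hx⟩ : ↥(W ⊓ W'))) (by simpa using hx0) ⟨y, hb, (hW'_mem y).2 hbg⟩
    exact (mk_eq_mk_iff.2 ⟨c, by simpa using congrArg Subtype.val hc.symm⟩).symm

theorem natCard_eq [Finite F] [FiniteDimensional K F] (hF : finrank K F = 3) :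
    Nat.card (SingerGroup K F) = Nat.card K ^ 2 + Nat.card K + 1 := by
  have : Finite K := Finite.of_injective _ (algebraMap K F).injective
  have hq : 1 < Nat.card K := Finite.one_lt_card
  have hH : Nat.card (Units.map (algebraMap K F : K →* F)).range = Nat.card K - 1 := by
    rw [← Nat.card_units]
    exact (Nat.card_congr (MonoidHom.ofInjective
      (Units.map_injective (algebraMap K F).injective)).toEquiv).symm
  have hlagrange := Subgroup.card_eq_card_quotient_mul_card_subgroup
    (Units.map (algebraMap K F : K →* F)).range
  rw [Nat.card_units, Module.natCard_eq_pow_finrank (K := K), hF, hH] at hlagrange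
  refine Nat.eq_of_mul_eq_mul_right (Nat.sub_pos_of_lt hq) (hlagrange.symm.trans ?_)
  obtain ⟨r, hr⟩ : ∃ r, Nat.card K = r + 1 := ⟨_, (Nat.succ_pred_eq_of_pos (by omega)).symm⟩
  rw [hr, Nat.add_sub_cancel]
  ring_nf; omega

instance [Finite F] : IsCyclic (SingerGroup K F) :=
  isCyclic_of_surjective _ (QuotientGroup.mk'_surjective _)

end SingerGroup

theorem exists_isPlanarDifferenceSet_of_finrank_eq_three [Finite F] [FiniteDimensional K F]
    (hF : finrank K F = 3) :
    ∃ D : Set (ZMod (Nat.card K ^ 2 + Nat.card K + 1)), IsPlanarDifferenceSet D := by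
  obtain ⟨v, hv⟩ := exists_linearIndependent_of_le_finrank (R := K) (M := F) (n := 2) (by omega)
  have hW : finrank K (Submodule.span K (Set.range v)) = 2 := by
    rw [finrank_span_eq_card hv, Fintype.card_fin]
  have : IsAddCyclic (Additive (SingerGroup K F)) := isAddCyclic_additive_iff.2 inferInstance
  let e : ZMod (Nat.card K ^ 2 + Nat.card K + 1) ≃+ Additive (SingerGroup K F) :=
    addEquivOfAddCyclicCardEq (by
      rw [Nat.card_zmod, Nat.card_congr Additive.toMul, SingerGroup.natCard_eq hF])
  have hL : IsPlanarDifferenceSet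
      (Additive.toMul ⁻¹' SingerGroup.lineOf (Submodule.span K (Set.range v))) :=
    fun _ hd => SingerGroup.existsUnique_mem_lineOf_mul_mem hF hW hd
  exact ⟨_, hL.preimage e⟩

theorem exists_isPlanarDifferenceSet_zmod {q : ℕ} (hq : IsPrimePow q) :
    ∃ D : Set (ZMod (q ^ 2 + q + 1)), IsPlanarDifferenceSet D := by
  obtain ⟨p, n, hp, hn, rfl⟩ := hq
  have : Fact p.Prime := ⟨hp.nat_prime⟩
  have := exists_isPlanarDifferenceSet_of_finrank_eq_three
    (FiniteField.finrank_extension (GaloisField p n) p 3)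
  rwa [GaloisField.card p n hn.ne'] at this

/-- for every prime power `q`, with `δ = q² + q + 1`, there is a subset
`D ⊆ ℤ/δℤ` such that the incidence structure with points `ℤ/δℤ`, lines `ℤ/δℤ`, and point
`p` incident to line `l` iff `l - p ∈ D`, is a projective plane of order `q`: two
distinct points lie on a unique common line, two distinct lines meet in a unique point,
there is a nondegenerate configuration of three points and three lines, and each line
contains exactly `q + 1` points. -/
theorem singer_plane_exists (q : ℕ) (hq : IsPrimePow q) :
    ∃ D : Set (ZMod (q ^ 2 + q + 1)),
      -- any two distinct points lie on a unique common line
      (∀ p p' : ZMod (q ^ 2 + q + 1), p ≠ p' →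
        ∃! l : ZMod (q ^ 2 + q + 1), l - p ∈ D ∧ l - p' ∈ D) ∧
      -- any two distinct lines meet in a unique common point
      (∀ l l' : ZMod (q ^ 2 + q + 1), l ≠ l' →
        ∃! p : ZMod (q ^ 2 + q + 1), l - p ∈ D ∧ l' - p ∈ D) ∧
      -- three points and three lines in nondegenerate position
      (∃ p₁ p₂ p₃ l₁ l₂ l₃ : ZMod (q ^ 2 + q + 1),
        l₂ - p₁ ∉ D ∧ l₃ - p₁ ∉ D ∧
        l₁ - p₂ ∉ D ∧ l₂ - p₂ ∈ D ∧ l₃ - p₂ ∈ D ∧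
        l₁ - p₃ ∉ D ∧ l₂ - p₃ ∈ D ∧ l₃ - p₃ ∉ D) ∧
      -- each line contains exactly `q + 1` points
      (∀ l : ZMod (q ^ 2 + q + 1), {p : ZMod (q ^ 2 + q + 1) | l - p ∈ D}.ncard = q + 1) := by
  obtain ⟨D, hD⟩ := exists_isPlanarDifferenceSet_zmod hq
  have hq₂ := hq.two_le
  have hcard : Nat.card (ZMod (q ^ 2 + q + 1)) = q ^ 2 + q + 1 := Nat.card_zmod _
  have hD_card : D.ncard = q + 1 := hD.ncard_eq_succ (by omega) hcard
  refine ⟨D, fun _ _ => hD.existsUnique_line, fun _ _ => hD.existsUnique_point,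
    hD.exists_nondegenerate (by omega) ?_, fun l => (ncard_setOf_const_sub_mem D l).trans hD_card⟩
  rw [hD_card, hcard]
  nlinarith
end

section
/- Let P and L be the (finite) points and lines of a projective plane of order q, and let δ = q² + q + 1. Suppose the additive group ℤ/δℤ acts on P and on L preserving incidence (for all n ∈ ℤ/δℤ, p ∈ P, l ∈ L: p is incident to l if and only if n + p is incident to n + l), and that both the action on P and the action on L are free and transitive. Fix a point p₀ ∈ P and a line l₀ ∈ L. Then D = {d ∈ ℤ/δℤ : p₀ is incident to d + l₀} is a difference set of order q in ℤ/δℤ: |D| = q + 1 and the map D × D → ℤ/δℤ, (x, y) ↦ x − y, restricted to pairs with x ≠ y, is a bijection onto the set of nonzero elements of ℤ/δℤ. -/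
/-- let `P, L` be the points and lines of a finite projective plane of order
`q` and `δ = q² + q + 1`. Suppose `ℤ/δℤ` acts on `P` and `L` preserving incidence, with
both actions free and transitive. Then for any point `p₀` and line `l₀`, the set
`D = {d : p₀ incident to d + l₀}` is a difference set of order `q` in `ℤ/δℤ`. -/
theorem diffSet_from_singer_action (q : ℕ) (P L : Type*) [Fintype P] [Fintype L]
    (Inc : P → L → Prop)
    -- `(P, L, Inc)` is a projective plane:
    (h₁ : ∀ p p' : P, p ≠ p' → ∃! l : L, Inc p l ∧ Inc p' l)
    (h₂ : ∀ l l' : L, l ≠ l' → ∃! p : P, Inc p l ∧ Inc p l')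
    (h₃ : ∃ (p₁ p₂ p₃ : P) (l₁ l₂ l₃ : L),
      ¬Inc p₁ l₂ ∧ ¬Inc p₁ l₃ ∧
      ¬Inc p₂ l₁ ∧ Inc p₂ l₂ ∧ Inc p₂ l₃ ∧
      ¬Inc p₃ l₁ ∧ Inc p₃ l₂ ∧ ¬Inc p₃ l₃)
    -- of order `q`: each point lies on exactly `q + 1` lines:
    (horder : ∀ p : P, {l : L | Inc p l}.ncard = q + 1)
    -- actions of `ℤ/δℤ` on `P` and on `L`:
    (actP : ZMod (q ^ 2 + q + 1) → P → P) (actL : ZMod (q ^ 2 + q + 1) → L → L)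
    (hP0 : ∀ p, actP 0 p = p) (hPadd : ∀ m n p, actP (m + n) p = actP m (actP n p))
    (hL0 : ∀ l, actL 0 l = l) (hLadd : ∀ m n l, actL (m + n) l = actL m (actL n l))
    -- preserving incidence:
    (hinc : ∀ n p l, Inc p l ↔ Inc (actP n p) (actL n l))
    -- both actions free and transitive:
    (hPreg : ∀ p p' : P, ∃! n, actP n p = p')
    (hLreg : ∀ l l' : L, ∃! n, actL n l = l')
    (p₀ : P) (l₀ : L) :
    {d : ZMod (q ^ 2 + q + 1) | Inc p₀ (actL d l₀)}.ncard = q + 1 ∧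
      IsDiffSet {d : ZMod (q ^ 2 + q + 1) | Inc p₀ (actL d l₀)} := by
  set D := {d : ZMod (q ^ 2 + q + 1) | Inc p₀ (actL d l₀)} with hDdef
  have freeP : ∀ n, actP n p₀ = p₀ → n = 0 := by
    intro n h
    obtain ⟨m, hm, hu⟩ := hPreg p₀ p₀
    rw [hu n h, hu 0 (hP0 p₀)]
  have einj : Function.Injective (fun d => actL d l₀) := by
    intro a b h
    obtain ⟨m, hm, hu⟩ := hLreg l₀ (actL b l₀)
    rw [hu a h, hu b rfl]
  have key : ∀ n x, Inc (actP n p₀) (actL x l₀) ↔ (x - n) ∈ D := by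
    intro n x
    rw [hinc (-n)]
    have h1 : actP (-n) (actP n p₀) = p₀ := by rw [← hPadd, neg_add_cancel, hP0]
    have h2 : actL (-n) (actL x l₀) = actL (x - n) l₀ := by
      rw [← hLadd, neg_add_eq_sub]
    rw [h1, h2]
    rfl
  constructor
  · have himg : (fun d => actL d l₀) '' D = {l | Inc p₀ l} := by
      ext l
      constructor
      · rintro ⟨d, hd, rfl⟩; exact hd
      · intro hl
        obtain ⟨d, hd, -⟩ := hLreg l₀ l
        exact ⟨d, by simpa [hDdef, hd] using hl, hd⟩
    rw [← horder p₀, ← himg, Set.ncard_image_of_injective _ einj]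
  · refine ⟨?_, ?_, ?_⟩
    · rintro ⟨x, y⟩ ⟨hx, hy, hne⟩
      exact sub_ne_zero.mpr hne
    · rintro ⟨x, y⟩ ⟨hx, hy, hxy⟩ ⟨x', y'⟩ ⟨hx', hy', hxy'⟩ h
      simp only at h
      have hn : x - y ≠ 0 := sub_ne_zero.mpr hxy
      have hpq : p₀ ≠ actP (x - y) p₀ := fun hh => hn (freeP _ hh.symm)
      obtain ⟨l, -, hu⟩ := h₁ p₀ (actP (x - y) p₀) hpq
      have e1 : Inc (actP (x - y) p₀) (actL x l₀) := by
        rw [key]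
        simpa using hy
      have e2 : Inc (actP (x - y) p₀) (actL x' l₀) := by
        rw [key, h]
        simpa using hy'
      have hx_eq : x = x' := einj ((hu _ ⟨hx, e1⟩).trans (hu _ ⟨hx', e2⟩).symm)
      have hy_eq : y = y' := by
        have := h
        rw [hx_eq] at this
        exact (sub_right_injective this)
      exact Prod.ext hx_eq hy_eq
    · intro n hn
      have hn0 : n ≠ 0 := hn
      have hpq : p₀ ≠ actP n p₀ := fun hh => hn0 (freeP _ hh.symm)
      obtain ⟨l, ⟨hp, hq⟩, -⟩ := h₁ p₀ (actP n p₀) hpq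
      obtain ⟨x, rfl, -⟩ := hLreg l₀ l
      refine ⟨(x, x - n), ⟨hp, (key n x).mp hq, ?_⟩, by simp⟩
      intro hh
      exact hn0 (by simpa using (congrArg (fun z => x - z) hh).symm)
end

section
/- Let q ≥ 1 be an integer and k = q + 1. Let G be the group given by the presentation with generators a_y for y ∈ ℤ/kℤ and relators a_0 together with a_y · a_z⁻¹ · a_{z−y} for all y, z ∈ ℤ/kℤ with y ≠ 0 and y ≠ z. Then G is isomorphic to the cyclic group ℤ/kℤ via the homomorphism sending each generator a_y to y. (This computes the fundamental group of the unique Singer cyclic digon of order q, which is cyclic of order k.) -/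
/-! The relators make sense over any additive group `A`. The relator for `y` and `z = w + y`
says `a_{w+y} = a_w * a_y`, so together with `a_0 = 1` the map `y ↦ a_y` is a homomorphism
from `Multiplicative A` to the presented group. It is inverse to the map `a_y ↦ y`, which
is well defined because `y - z + (z - y) = 0`. -/

/-- The relators of the fundamental group of the Singer cyclic digon of order `q = k - 1`:
generators `a_y` for `y ∈ ℤ/kℤ`; relators `a_0` and `a_y * a_z⁻¹ * a_{z-y}` for
`y, z ∈ ℤ/kℤ` with `y ≠ 0` and `y ≠ z`. -/
def digonRels (k : ℕ) : Set (FreeGroup (ZMod k)) :=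
  {FreeGroup.of (0 : ZMod k)} ∪
    {w : FreeGroup (ZMod k) | ∃ y z : ZMod k, y ≠ 0 ∧ y ≠ z ∧
      w = FreeGroup.of y * (FreeGroup.of z)⁻¹ * FreeGroup.of (z - y)}

def differenceRels (A : Type*) [AddGroup A] : Set (FreeGroup A) :=
  {FreeGroup.of 0} ∪
    {w | ∃ y z : A, y ≠ 0 ∧ y ≠ z ∧
      w = FreeGroup.of y * (FreeGroup.of z)⁻¹ * FreeGroup.of (z - y)}

theorem digonRels_eq_differenceRels (k : ℕ) : digonRels k = differenceRels (ZMod k) := rfl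

namespace differenceRels

variable {A : Type*} [AddGroup A]

theorem mk_eq_one_of_mem {r : FreeGroup A} (hr : r ∈ differenceRels A) :
    PresentedGroup.mk (differenceRels A) r = 1 :=
  (QuotientGroup.eq_one_iff r).mpr (Subgroup.subset_normalClosure hr)

theorem of_zero : (PresentedGroup.of 0 : PresentedGroup (differenceRels A)) = 1 :=
  mk_eq_one_of_mem (Or.inl rfl)

theorem of_add (w y : A) :
    (PresentedGroup.of (w + y) : PresentedGroup (differenceRels A)) =
      PresentedGroup.of w * PresentedGroup.of y := by
  rcases eq_or_ne w 0 with rfl | hw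
  · rw [zero_add, of_zero, one_mul]
  rcases eq_or_ne y 0 with rfl | hy
  · rw [add_zero, of_zero, mul_one]
  have hrel : PresentedGroup.of y * (PresentedGroup.of (w + y))⁻¹ * PresentedGroup.of w =
      (1 : PresentedGroup (differenceRels A)) := by
    have := mk_eq_one_of_mem (Or.inr ⟨y, w + y, hy, fun h => hw (right_eq_add.mp h), rfl⟩)
    simp only [add_sub_cancel_right, map_mul, map_inv] at this
    exact this
  rw [← inv_inj, mul_inv_rev]
  exact eq_inv_mul_of_mul_eq (eq_inv_of_mul_eq_one_left hrel)

theorem lift_ofAdd_eq_one (r : FreeGroup A) (hr : r ∈ differenceRels A) :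
    FreeGroup.lift Multiplicative.ofAdd r = 1 := by
  rcases hr with rfl | ⟨y, z, -, -, rfl⟩
  · rw [FreeGroup.lift_apply_of, ofAdd_zero]
  · simp only [map_mul, map_inv, FreeGroup.lift_apply_of, ← ofAdd_neg, ← ofAdd_add]
    rw [sub_eq_add_neg, add_assoc, neg_add_cancel_left, add_neg_cancel, ofAdd_zero]

def toMultiplicative : PresentedGroup (differenceRels A) →* Multiplicative A :=
  PresentedGroup.toGroup lift_ofAdd_eq_one

theorem toMultiplicative_of (y : A) :
    toMultiplicative (PresentedGroup.of y) = Multiplicative.ofAdd y :=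
  PresentedGroup.toGroup.of lift_ofAdd_eq_one

def ofMultiplicative : Multiplicative A →* PresentedGroup (differenceRels A) where
  toFun x := PresentedGroup.of x.toAdd
  map_one' := of_zero
  map_mul' x y := of_add x.toAdd y.toAdd

def mulEquiv : PresentedGroup (differenceRels A) ≃* Multiplicative A :=
  toMultiplicative.toMulEquiv ofMultiplicative
    (PresentedGroup.ext fun y => congrArg ofMultiplicative (toMultiplicative_of y))
    (MonoidHom.ext fun x => toMultiplicative_of x.toAdd)

theorem mulEquiv_of (y : A) : mulEquiv (PresentedGroup.of y) = Multiplicative.ofAdd y :=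
  toMultiplicative_of y

end differenceRels

theorem digon_fundamental_group_general (k : ℕ) :
    ∃ e : PresentedGroup (digonRels k) ≃* Multiplicative (ZMod k),
      ∀ y : ZMod k, e (PresentedGroup.of y) = Multiplicative.ofAdd y := by
  rw [digonRels_eq_differenceRels]
  exact ⟨differenceRels.mulEquiv, differenceRels.mulEquiv_of⟩

/-- the group presented by generators `a_y` (`y ∈ ℤ/kℤ`) and relators `a_0`
and `a_y * a_z⁻¹ * a_{z-y}` (for `y ≠ 0`, `y ≠ z`) is isomorphic to the cyclic group
`ℤ/kℤ` via the homomorphism sending each generator `a_y` to `y`. -/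
theorem digon_fundamental_group (q : ℕ) (hq : 1 ≤ q) (k : ℕ) (hk : k = q + 1) :
    ∃ e : PresentedGroup (digonRels k) ≃* Multiplicative (ZMod k),
      ∀ y : ZMod k, e (PresentedGroup.of y) = Multiplicative.ofAdd y :=
  digon_fundamental_group_general k
end

section
/- Let q ≥ 2, δ = q² + q + 1, and let D ⊆ ℤ/δℤ be a based difference set of order q (so 0 ∈ D, |D| = q + 1, and the off-diagonal difference map D × D → ℤ/δℤ is a bijection onto the nonzero elements). Let G be the group given by the presentation with generators a_d for d ∈ D and relators a_0 together with a_x · a_y⁻¹ · a_z · a_{y'}⁻¹ · a_{x'} for all x, y, z, y', x' ∈ D with x ≠ 0, x ≠ y, y ≠ z, and y' − x' = x − y + z. Then G is isomorphic to the cyclic group ℤ/δℤ via the homomorphism sending each generator a_d to d. (This computes the fundamental group of the Singer cyclic triangle δ\T(D), which is cyclic of order δ.) -/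
/-- The relators of the fundamental group of the Singer cyclic triangle `δ\T(D)`:
generators `a_d` for `d ∈ D`; relators `a_0` and `a_x * a_y⁻¹ * a_z * a_{y'}⁻¹ * a_{x'}`
for `x, y, z, y', x' ∈ D` with `x ≠ 0`, `x ≠ y`, `y ≠ z` and `y' - x' = x - y + z`. -/
def triangleRels {δ : ℕ} (D : Set (ZMod δ)) : Set (FreeGroup D) :=
  {w : FreeGroup D | ∃ h0 : (0 : ZMod δ) ∈ D, w = FreeGroup.of (⟨0, h0⟩ : D)} ∪
    {w : FreeGroup D | ∃ x y z y' x' : D,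
      (x : ZMod δ) ≠ 0 ∧ x ≠ y ∧ y ≠ z ∧
      (y' : ZMod δ) - (x' : ZMod δ) = (x : ZMod δ) - (y : ZMod δ) + (z : ZMod δ) ∧
      w = FreeGroup.of x * (FreeGroup.of y)⁻¹ * FreeGroup.of z *
            (FreeGroup.of y')⁻¹ * FreeGroup.of x'}

variable {δ : ℕ} {D : Set (ZMod δ)}

theorem IsDiffSet.eq_of_sub_eq (hD : IsDiffSet D) {x y x' y' : D} (hxy : x ≠ y)
    (h : (x : ZMod δ) - y = x' - y') : x = x' ∧ y = y' := by
  have hxy₀ : (x : ZMod δ) ≠ y := Subtype.coe_injective.ne hxy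
  have hxy' : (x' : ZMod δ) ≠ y' := by rwa [← sub_ne_zero, ← h, sub_ne_zero]
  have h' := hD.injOn (x₁ := ((x : ZMod δ), (y : ZMod δ))) (x₂ := ((x' : ZMod δ), (y' : ZMod δ)))
    ⟨x.2, y.2, hxy₀⟩ ⟨x'.2, y'.2, hxy'⟩ h
  simp only [Prod.mk.injEq] at h'
  exact ⟨Subtype.ext h'.1, Subtype.ext h'.2⟩

theorem IsDiffSet.exists_sub_eq (hD : IsDiffSet D) (h0 : (0 : ZMod δ) ∈ D) (n : ZMod δ) :
    ∃ p : D × D, (p.1 : ZMod δ) - p.2 = n := by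
  rcases eq_or_ne n 0 with rfl | hn
  · exact ⟨(⟨0, h0⟩, ⟨0, h0⟩), sub_self _⟩
  · obtain ⟨⟨x, y⟩, ⟨hx, hy, -⟩, hxy⟩ := hD.surjOn hn
    exact ⟨(⟨x, hx⟩, ⟨y, hy⟩), hxy⟩

theorem IsDiffSet.monoidHom_ext (hD : IsDiffSet D) (h0 : (0 : ZMod δ) ∈ D)
    {K : Type*} [Group K] {f g : Multiplicative (ZMod δ) →* K}
    (h : ∀ d : D, f (.ofAdd d) = g (.ofAdd d)) : f = g := by
  refine MonoidHom.ext fun n ↦ ?_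
  obtain ⟨⟨x, y⟩, hxy⟩ := hD.exists_sub_eq h0 (Multiplicative.toAdd n)
  rw [← ofAdd_toAdd n, ← hxy, ofAdd_sub, map_div, map_div, h, h]

namespace SingerTriangle

section Group

variable {H : Type*} [Group H] {a : D → H}

theorem apply_zero_eq_one (ha : ∀ r ∈ triangleRels D, FreeGroup.lift a r = 1)
    (h0 : (0 : ZMod δ) ∈ D) : a ⟨0, h0⟩ = 1 := by
  simpa using ha _ (Or.inl ⟨h0, rfl⟩)

theorem relator_eq_one (ha : ∀ r ∈ triangleRels D, FreeGroup.lift a r = 1)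
    {x y z y' x' : D} (hx : (x : ZMod δ) ≠ 0) (hxy : x ≠ y) (hyz : y ≠ z)
    (h : (y' : ZMod δ) - x' = x - y + z) : a x * (a y)⁻¹ * a z * (a y')⁻¹ * a x' = 1 := by
  simpa using ha _ (Or.inr ⟨x, y, z, y', x', hx, hxy, hyz, h, rfl⟩)

theorem commute_apply (ha : ∀ r ∈ triangleRels D, FreeGroup.lift a r = 1)
    (h0 : (0 : ZMod δ) ∈ D) (x y : D) : Commute (a x) (a y) := by
  obtain rfl | hx := eq_or_ne x ⟨0, h0⟩
  · simp [apply_zero_eq_one ha h0]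
  obtain rfl | hy := eq_or_ne y ⟨0, h0⟩
  · simp [apply_zero_eq_one ha h0]
  obtain rfl | hxy := eq_or_ne x y
  · rfl
  have h := relator_eq_one ha (z := ⟨0, h0⟩) (y' := x) (x' := y)
    (fun h ↦ hx (Subtype.ext h)) hxy hy (by simp)
  rw [apply_zero_eq_one ha h0, mul_one] at h
  exact Commute.inv_right_iff.mp (mul_inv_eq_iff_eq_mul.mp (mul_eq_one_iff_eq_inv.mp h))

end Group

theorem lift_of_eq_one :
    ∀ r ∈ triangleRels D, FreeGroup.lift (PresentedGroup.of (rels := triangleRels D)) r = 1 := by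
  intro r hr
  rw [← PresentedGroup.one_of_mem hr]
  exact (FreeGroup.lift_unique (PresentedGroup.mk _) fun _ ↦ rfl).symm

theorem lift_ofAdd_eq_one :
    ∀ r ∈ triangleRels D, FreeGroup.lift (fun d : D ↦ Multiplicative.ofAdd (d : ZMod δ)) r = 1 := by
  rintro r (⟨h0, rfl⟩ | ⟨x, y, z, y', x', -, -, -, h, rfl⟩)
  · simp
  · simp only [map_mul, map_inv, FreeGroup.lift_apply_of]
    rw [← ofAdd_neg, ← ofAdd_neg, ← ofAdd_add, ← ofAdd_add, ← ofAdd_add, ← ofAdd_add,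
      ← ofAdd_zero]
    congr 1
    linear_combination -h

theorem mul_comm_of_zero_mem (h0 : (0 : ZMod δ) ∈ D) (g h : PresentedGroup (triangleRels D)) :
    g * h = h * g := by
  have hof (x : D) (g : PresentedGroup (triangleRels D)) : Commute g (PresentedGroup.of x) :=
    Subgroup.mem_centralizer_singleton_iff.mp <|
      PresentedGroup.generated_by _ _ (fun y ↦ Subgroup.mem_centralizer_singleton_iff.mpr
        (commute_apply lift_of_eq_one h0 y x).eq) g
  exact Subgroup.mem_centralizer_singleton_iff.mp <|
    PresentedGroup.generated_by _ _ (fun x ↦ Subgroup.mem_centralizer_singleton_iff.mpr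
      (hof x h).symm.eq) g

section CommGroup

variable {H : Type*} [CommGroup H] {a : D → H}

theorem div_eq_of_sub_eq (hD : IsDiffSet D) (ha : ∀ r ∈ triangleRels D, FreeGroup.lift a r = 1)
    (h0 : (0 : ZMod δ) ∈ D) {x y z : D} (h : (x : ZMod δ) - y = z) : a x / a y = a z := by
  obtain rfl | hxy := eq_or_ne x y
  · have hz : z = ⟨0, h0⟩ := Subtype.ext (by simp [← h])
    rw [div_self', hz, apply_zero_eq_one ha h0]
  · obtain ⟨rfl, rfl⟩ := hD.eq_of_sub_eq (x' := z) (y' := ⟨0, h0⟩) hxy (by simpa using h)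
    rw [apply_zero_eq_one ha h0, div_one]

theorem div_mul_eq_div_of_sub_eq (hD : IsDiffSet D)
    (ha : ∀ r ∈ triangleRels D, FreeGroup.lift a r = 1) (h0 : (0 : ZMod δ) ∈ D)
    {x y z y' x' : D} (h : (y' : ZMod δ) - x' = x - y + z) : a x / a y * a z = a y' / a x' := by
  obtain rfl | hxy := eq_or_ne x y
  · rw [div_self', one_mul, div_eq_of_sub_eq hD ha h0 (by simpa using h)]
  obtain rfl | hyz := eq_or_ne y z
  · rw [div_mul_cancel, div_eq_of_sub_eq hD ha h0 (by simpa using h)]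
  obtain rfl | hx := eq_or_ne x ⟨0, h0⟩
  · obtain ⟨rfl, rfl⟩ := hD.eq_of_sub_eq (x' := y') (y' := x') hyz.symm
      (by rw [h]; dsimp only; ring)
    rw [apply_zero_eq_one ha h0, one_div, inv_mul_eq_div]
  · have hrel := relator_eq_one ha (fun h ↦ hx (Subtype.ext h)) hxy hyz h
    rw [← div_eq_one, ← hrel]
    simp only [div_eq_mul_inv, mul_inv, inv_inv]
    ac_rfl

/-- `a x / a y` for a chosen pair `x, y ∈ D` with `x - y = n`; by `diffMap_eq` the value does not
depend on the choice. -/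
noncomputable def diffMap (hD : IsDiffSet D) (h0 : (0 : ZMod δ) ∈ D) (a : D → H) (n : ZMod δ) :
    H :=
  a (hD.exists_sub_eq h0 n).choose.1 / a (hD.exists_sub_eq h0 n).choose.2

theorem diffMap_eq (hD : IsDiffSet D) (ha : ∀ r ∈ triangleRels D, FreeGroup.lift a r = 1)
    (h0 : (0 : ZMod δ) ∈ D) {x y : D} {n : ZMod δ} (h : (x : ZMod δ) - y = n) :
    diffMap hD h0 a n = a x / a y := by
  have hchoose := (hD.exists_sub_eq h0 n).choose_spec
  have h' := div_mul_eq_div_of_sub_eq hD ha h0 (x := x) (y := y) (z := ⟨0, h0⟩)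
    (hchoose.trans (by simp [← h]))
  rwa [apply_zero_eq_one ha h0, mul_one, eq_comm] at h'

theorem diffMap_add_coe (hD : IsDiffSet D) (ha : ∀ r ∈ triangleRels D, FreeGroup.lift a r = 1)
    (h0 : (0 : ZMod δ) ∈ D) (n : ZMod δ) (z : D) :
    diffMap hD h0 a (n + z) = diffMap hD h0 a n * a z := by
  obtain ⟨⟨x, y⟩, hxy : (x : ZMod δ) - y = n⟩ := hD.exists_sub_eq h0 n
  obtain ⟨⟨y', x'⟩, hxy' : (y' : ZMod δ) - x' = n + z⟩ := hD.exists_sub_eq h0 (n + z)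
  rw [diffMap_eq hD ha h0 hxy, diffMap_eq hD ha h0 hxy',
    div_mul_eq_div_of_sub_eq hD ha h0 (by rw [hxy', ← hxy])]

theorem diffMap_add (hD : IsDiffSet D) (ha : ∀ r ∈ triangleRels D, FreeGroup.lift a r = 1)
    (h0 : (0 : ZMod δ) ∈ D) (m n : ZMod δ) :
    diffMap hD h0 a (m + n) = diffMap hD h0 a m * diffMap hD h0 a n := by
  obtain ⟨⟨u, v⟩, huv : (u : ZMod δ) - v = n⟩ := hD.exists_sub_eq h0 n
  have key : diffMap hD h0 a (m + n) * a v = diffMap hD h0 a m * a u := by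
    rw [← diffMap_add_coe hD ha h0, ← diffMap_add_coe hD ha h0, ← huv, add_assoc, sub_add_cancel]
  rw [diffMap_eq hD ha h0 huv, ← mul_div_assoc, ← key, mul_div_cancel_right]

noncomputable def lift (hD : IsDiffSet D) (h0 : (0 : ZMod δ) ∈ D)
    (ha : ∀ r ∈ triangleRels D, FreeGroup.lift a r = 1) : Multiplicative (ZMod δ) →* H where
  toFun n := diffMap hD h0 a n.toAdd
  map_one' := by
    simpa using diffMap_eq hD ha h0 (x := ⟨0, h0⟩) (y := ⟨0, h0⟩) (sub_self _)
  map_mul' m n := diffMap_add hD ha h0 m.toAdd n.toAdd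

theorem lift_ofAdd (hD : IsDiffSet D) (h0 : (0 : ZMod δ) ∈ D)
    (ha : ∀ r ∈ triangleRels D, FreeGroup.lift a r = 1) (d : D) :
    lift hD h0 ha (.ofAdd d) = a d := by
  change diffMap hD h0 a d = a d
  rw [diffMap_eq hD ha h0 (y := ⟨0, h0⟩) (sub_zero _), apply_zero_eq_one ha h0, div_one]

end CommGroup

end SingerTriangle

theorem triangle_fundamental_group_general (q : ℕ)
    (D : Set (ZMod (q ^ 2 + q + 1)))
    (h0 : (0 : ZMod (q ^ 2 + q + 1)) ∈ D)
    (hD : IsDiffSet D) :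
    ∃ e : PresentedGroup (triangleRels D) ≃* Multiplicative (ZMod (q ^ 2 + q + 1)),
      ∀ d : D, e (PresentedGroup.of d) = Multiplicative.ofAdd (d : ZMod (q ^ 2 + q + 1)) := by
  open SingerTriangle in
  let : CommGroup (PresentedGroup (triangleRels D)) :=
    { mul_comm := mul_comm_of_zero_mem h0 }
  let φ := PresentedGroup.toGroup (lift_ofAdd_eq_one (D := D))
  let ψ := lift hD h0 lift_of_eq_one
  refine ⟨φ.toMulEquiv ψ ?_ ?_, fun _ ↦ PresentedGroup.toGroup.of (lift_ofAdd_eq_one (D := D))⟩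
  · ext d
    simp [φ, ψ, lift_ofAdd]
  · exact hD.monoidHom_ext h0 fun d ↦ by simp [φ, ψ, lift_ofAdd]

/-- let `q ≥ 2`, `δ = q² + q + 1`, and let `D ⊆ ℤ/δℤ` be a based difference
set of order `q`. The group presented by generators `a_d` (`d ∈ D`) and relators `a_0`
and `a_x * a_y⁻¹ * a_z * a_{y'}⁻¹ * a_{x'}` (for `x, y, z, y', x' ∈ D` with `x ≠ 0`,
`x ≠ y`, `y ≠ z`, `y' - x' = x - y + z`) is isomorphic to the cyclic group `ℤ/δℤ` via the
homomorphism sending each generator `a_d` to `d`. -/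
theorem triangle_fundamental_group (q : ℕ) (hq : 2 ≤ q)
    (D : Set (ZMod (q ^ 2 + q + 1)))
    (h0 : (0 : ZMod (q ^ 2 + q + 1)) ∈ D) (hcard : D.ncard = q + 1)
    (hD : IsDiffSet D) :
    ∃ e : PresentedGroup (triangleRels D) ≃* Multiplicative (ZMod (q ^ 2 + q + 1)),
      ∀ d : D, e (PresentedGroup.of d) = Multiplicative.ofAdd (d : ZMod (q ^ 2 + q + 1)) :=
  triangle_fundamental_group_general q D h0 hD
end
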